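/- Let ψ : ℝ → ℝ be defined by ψ(x) = 3x if x < 1/2 and ψ(x) = 3x − 2 if x ≥ 1/2. Then the set of points all of whose forward ψ-iterates remain in [0,1], namely ⋂_{n ∈ ℕ} (ψ^n)⁻¹([0,1]) (where ψ^n denotes the n-fold iterate of ψ), equals the middle-thirds Cantor set, i.e., the set of real numbers of the form ∑_{n=0}^{∞} a_n / 3^{n+1} where each digit a_n ∈ {0, 2}. -/

import Mathlib

/-!
A point with ternary digits `aₙ ∈ {0, 2}` lies below `1/2` iff `a₀ = 0`, so `ψ` acts on
`∑ aₙ / 3^(n+1)` as the shift of digits and every iterate stays in `[0, 1]`. Conversely,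
taking as `k`-th digit `0` or `2` according to the side of `1/2` on which `ψᵏ(x)` lies gives
`x = ∑_{k<n} aₖ / 3^(k+1) + ψⁿ(x) / 3ⁿ`, and the remainder tends to `0` when all `ψⁿ(x)` stay
in `[0, 1]`.
-/

open Set Filter Topology

noncomputable def ternarySum (a : ℕ → ℝ) : ℝ := ∑' n, a n / 3 ^ (n + 1)

noncomputable def cantorDigit (x : ℝ) : ℝ := if x < 1 / 2 then 0 else 2

lemma cantorDigit_eq_zero_or_two (x : ℝ) : cantorDigit x = 0 ∨ cantorDigit x = 2 := by
  unfold cantorDigit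
  split_ifs <;> simp

lemma mem_Icc_of_eq_zero_or_two {t : ℝ} (ht : t = 0 ∨ t = 2) : t ∈ Icc (0 : ℝ) 2 := by
  rcases ht with rfl | rfl <;> norm_num

lemma hasSum_two_div_three_pow_succ : HasSum (fun n : ℕ => (2 : ℝ) / 3 ^ (n + 1)) 1 := by
  have hterm : ∀ n : ℕ, (2 : ℝ) / 3 ^ (n + 1) = 2 / 3 * (1 / 3) ^ n := fun n => by
    rw [one_div_pow, pow_succ]
    field_simp
  have h := (hasSum_geometric_of_lt_one (r := (1 / 3 : ℝ)) (by norm_num) (by norm_num)).mul_left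
    (2 / 3)
  rw [show (2 / 3 : ℝ) * (1 - 1 / 3)⁻¹ = 1 by norm_num] at h
  rwa [funext hterm]

section DigitSequences

variable {a : ℕ → ℝ}

lemma summable_div_three_pow_succ (ha : ∀ n, a n ∈ Icc (0 : ℝ) 2) :
    Summable fun n => a n / 3 ^ (n + 1) :=
  hasSum_two_div_three_pow_succ.summable.of_nonneg_of_le
    (fun n => div_nonneg (ha n).1 (by positivity))
    (fun n => div_le_div_of_nonneg_right (ha n).2 (by positivity))

lemma ternarySum_mem_Icc (ha : ∀ n, a n ∈ Icc (0 : ℝ) 2) : ternarySum a ∈ Icc (0 : ℝ) 1 :=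
  ⟨tsum_nonneg fun n => div_nonneg (ha n).1 (by positivity),
    hasSum_le (fun n => div_le_div_of_nonneg_right (ha n).2 (by positivity))
      (summable_div_three_pow_succ ha).hasSum hasSum_two_div_three_pow_succ⟩

lemma ternarySum_eq_div_three (ha : ∀ n, a n ∈ Icc (0 : ℝ) 2) :
    ternarySum a = (a 0 + ternarySum fun n => a (n + 1)) / 3 := by
  have htail : ∀ n : ℕ, a (n + 1) / 3 ^ (n + 1 + 1) = a (n + 1) / 3 ^ (n + 1) / 3 := fun n => by
    rw [pow_succ _ (n + 1), div_div]
  rw [ternarySum, (summable_div_three_pow_succ ha).tsum_eq_zero_add, tsum_congr htail,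
    tsum_div_const, ternarySum]
  ring

lemma cantorDigit_ternarySum (ha : ∀ n, a n = 0 ∨ a n = 2) :
    cantorDigit (ternarySum a) = a 0 := by
  have hdigits : ∀ n, a n ∈ Icc (0 : ℝ) 2 := fun n => mem_Icc_of_eq_zero_or_two (ha n)
  have htail := ternarySum_mem_Icc fun n => hdigits (n + 1)
  rw [cantorDigit, ternarySum_eq_div_three hdigits]
  rcases ha 0 with h0 | h0 <;> rw [h0]
  · rw [if_pos (by linarith [htail.2])]
  · rw [if_neg (by linarith [htail.1])]

end DigitSequences

section ExpandingMap

variable {f d : ℝ → ℝ}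

lemma iterate_ternarySum (hf : ∀ y, f y = 3 * y - d y)
    (hd : ∀ a : ℕ → ℝ, (∀ n, a n = 0 ∨ a n = 2) → d (ternarySum a) = a 0)
    (m : ℕ) {a : ℕ → ℝ} (ha : ∀ n, a n = 0 ∨ a n = 2) :
    f^[m] (ternarySum a) = ternarySum fun n => a (n + m) := by
  induction m generalizing a with
  | zero => rfl
  | succ m ih =>
    have hdigits : ∀ n, a n ∈ Icc (0 : ℝ) 2 := fun n => mem_Icc_of_eq_zero_or_two (ha n)
    have hshift : f (ternarySum a) = ternarySum fun n => a (n + 1) := by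
      rw [hf, hd a ha, ternarySum_eq_div_three hdigits]
      ring
    rw [Function.iterate_succ_apply, hshift, ih fun n => ha (n + 1)]
    simp only [add_assoc]

lemma eq_sum_range_add_iterate_div (hf : ∀ y, f y = 3 * y - d y) (x : ℝ) (n : ℕ) :
    x = ∑ k ∈ Finset.range n, d (f^[k] x) / 3 ^ (k + 1) + f^[n] x / 3 ^ n := by
  induction n with
  | zero => simp
  | succ n ih =>
    rw [Finset.sum_range_succ, Function.iterate_succ_apply', hf, pow_succ]
    conv_lhs => rw [ih]
    field_simp
    ring

lemma hasSum_digit_expansion_of_iterate_mem_Icc (hf : ∀ y, f y = 3 * y - d y)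
    (hd : ∀ y, 0 ≤ d y) {x : ℝ} (hx : ∀ n, f^[n] x ∈ Icc (0 : ℝ) 1) :
    HasSum (fun k => d (f^[k] x) / 3 ^ (k + 1)) x := by
  rw [hasSum_iff_tendsto_nat_of_nonneg (fun k => div_nonneg (hd _) (by positivity))]
  have hremainder : Tendsto (fun n : ℕ => f^[n] x / 3 ^ n) atTop (𝓝 0) := by
    refine squeeze_zero (fun n => div_nonneg (hx n).1 (by positivity)) (fun n => ?_)
      (tendsto_pow_atTop_nhds_zero_of_lt_one (r := (1 / 3 : ℝ)) (by norm_num) (by norm_num))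
    rw [one_div_pow]
    exact div_le_div_of_nonneg_right (hx n).2 (by positivity)
  have hpartial : (fun n => ∑ k ∈ Finset.range n, d (f^[k] x) / 3 ^ (k + 1))
      = fun n => x - f^[n] x / 3 ^ n := by
    ext n
    linarith [eq_sum_range_add_iterate_div hf x n]
  simpa [hpartial] using tendsto_const_nhds.sub hremainder

end ExpandingMap

/-- The set of points all of whose forward iterates under the expanding map
`ψ(x) = 3x` (for `x < 1/2`), `ψ(x) = 3x - 2` (for `x ≥ 1/2`) remain in `[0,1]`
is exactly the middle-thirds Cantor set, i.e. the set of sums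
`∑ aₙ / 3^(n+1)` with all digits `aₙ ∈ {0, 2}`. -/
theorem ternary_cantor_set_eq_maximal_invariant (ψ : ℝ → ℝ)
    (hψ : ∀ x : ℝ, ψ x = if x < 1 / 2 then 3 * x else 3 * x - 2) :
    (⋂ n : ℕ, ψ^[n] ⁻¹' Icc (0 : ℝ) 1) =
      {x : ℝ | ∃ a : ℕ → ℝ, (∀ n, a n = 0 ∨ a n = 2) ∧
        x = ∑' n : ℕ, a n / 3 ^ (n + 1)} := by
  have hψ_digit : ∀ y, ψ y = 3 * y - cantorDigit y := fun y => by
    rw [hψ, cantorDigit]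
    split_ifs <;> ring
  ext x
  simp only [mem_iInter, mem_preimage]
  constructor
  · intro hx
    refine ⟨fun k => cantorDigit (ψ^[k] x), fun k => cantorDigit_eq_zero_or_two _, ?_⟩
    exact (hasSum_digit_expansion_of_iterate_mem_Icc hψ_digit
      (fun y => (mem_Icc_of_eq_zero_or_two (cantorDigit_eq_zero_or_two y)).1) hx).tsum_eq.symm
  · rintro ⟨a, ha, rfl⟩ n
    rw [← ternarySum, iterate_ternarySum hψ_digit (fun _ => cantorDigit_ternarySum) n ha]
    exact ternarySum_mem_Icc fun k => mem_Icc_of_eq_zero_or_two (ha (k + n))
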